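/- Let T > 0, let λ : ℝ → ℝ be continuously differentiable and strictly positive on [0,T], and let λ_θ : ℝ → ℝ be twice continuously differentiable and strictly positive on [0,T]. Set g(t) = λ'(t)/λ(t) and g_θ(t) = λ_θ'(t)/λ_θ(t). For each N ≥ 1, let S_N = {t ∈ ℝ^N : 0 ≤ t_1 ≤ ⋯ ≤ t_N ≤ T} and p_N(t) = (∏_{n=1}^N λ(t_n))·exp(−∫_0^T λ(s) ds). Assume that each of the following series over N ≥ 1 converges absolutely: ∑_N ∫_{S_N} p_N(t)·∑_{n=1}^N (g(t_n) − g_θ(t_n))² dt, ∑_N ∫_{S_N} p_N(t)·∑_{n=1}^N ((1/2)·g_θ(t_n)² + g_θ'(t_n)) dt, ∑_N ∫_{S_N} p_N(t)·∑_{n=1}^N g(t_n)² dt, ∑_N ∫_{S_{N−1}} p_N(0, s_1,…,s_{N−1}) ds, and ∑_N ∫_{S_{N−1}} p_N(s_1,…,s_{N−1}, T) ds (the N = 1 boundary terms being p_1(0) and p_1(T)). Then (1/2)·∑_{N≥1} ∫_{S_N} p_N(t)·∑_n (g(t_n) − g_θ(t_n))² dt = ∑_{N≥1} ∫_{S_N}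 p_N(t)·∑_n ((1/2)·g_θ(t_n)² + g_θ'(t_n)) dt + (1/2)·∑_{N≥1} ∫_{S_N} p_N(t)·∑_n g(t_n)² dt + g_θ(0)·∑_{N≥1} ∫_{S_{N−1}} p_N(0, s) ds − g_θ(T)·∑_{N≥1} ∫_{S_{N−1}} p_N(s, T) ds. In particular, the explicit score-matching objective equals the implicit one plus a λ_θ-independent constant if and only if the sum of the two boundary series, weighted by g_θ(0) and g_θ(T), does not depend on λ_θ. -/

import Mathlib

open MeasureTheory Real Set

/-- The ordered simplex `S_N = {t ∈ ℝ^N : 0 ≤ t 1 ≤ ⋯ ≤ t N ≤ T}`. -/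
def ordSimplex (N : ℕ) (T : ℝ) : Set (Fin N → ℝ) :=
  {t | Monotone t ∧ ∀ i, t i ∈ Set.Icc 0 T}

/-- The Poisson density on the ordered simplex:
`p_N t = (∏ n, lam (t n)) · exp (-∫_0^T lam)`. -/
noncomputable def poissonDensity (lam : ℝ → ℝ) (T : ℝ) {N : ℕ} (t : Fin N → ℝ) : ℝ :=
  (∏ n, lam (t n)) * Real.exp (-(∫ s in (0:ℝ)..T, lam s))

/-!
Expanding `(g - g_θ)²` reduces the identity to its cross term: the series with integrand
`∑ₙ (g g_θ + g_θ')(tₙ)` must equal the boundary terms. Since `λ (g g_θ + g_θ') = (λ g_θ)'`, this is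
an integration by parts on the simplex. Integrating out the largest event time first and using
`∫_{S_N(x)} ∏ₙ λ(tₙ) = Λ(x)ᴺ / N!` with `Λ(x) = ∫₀ˣ λ` gives
`∫_{S_{N+1}} ∏ₙ λ(tₙ) ∑ₙ φ(tₙ) = Λ(T)ᴺ / N! · (Φ T - Φ 0)` whenever `Φ' = λ φ`. For `Φ = λ g_θ`
the endpoint values, times `e^{-Λ(T)} Λ(T)ᴺ / N!`, are `g_θ(T)` and `g_θ(0)` times the boundary
integrals of `p_{N+1}`.
-/

lemma isClosed_ordSimplex (N : ℕ) (b : ℝ) : IsClosed (ordSimplex N b) := by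
  have hinter : ordSimplex N b = {t | Monotone t} ∩ ⋂ i, (fun t => t i) ⁻¹' Icc 0 b := by
    ext; simp [ordSimplex]
  rw [hinter]
  exact isClosed_monotone.inter
    (isClosed_iInter fun i => isClosed_Icc.preimage (continuous_apply i))

lemma isCompact_ordSimplex (N : ℕ) (b : ℝ) : IsCompact (ordSimplex N b) :=
  (isCompact_univ_pi fun _ => isCompact_Icc).of_isClosed_subset (isClosed_ordSimplex N b)
    fun _ ht i _ => ht.2 i

lemma ordSimplex_zero (b : ℝ) : ordSimplex 0 b = univ :=
  eq_univ_of_forall fun _ => ⟨fun i => i.elim0, fun i => i.elim0⟩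

lemma snoc_mem_ordSimplex_iff {N : ℕ} {b x : ℝ} {s : Fin N → ℝ} :
    Fin.snoc s x ∈ ordSimplex (N + 1) b ↔ x ∈ Icc 0 b ∧ s ∈ ordSimplex N x := by
  simp only [ordSimplex, mem_ofPred_eq, Monotone, Fin.forall_fin_succ', Fin.snoc_castSucc,
    Fin.snoc_last, Fin.castSucc_le_castSucc_iff, (Fin.castSucc_lt_last _).le,
    not_le.2 (Fin.castSucc_lt_last _), mem_Icc, true_implies, false_implies, implies_true,
    le_refl, and_true, forall_and]
  grind

def snocMeasurableEquiv (N : ℕ) : ℝ × (Fin N → ℝ) ≃ᵐ (Fin (N + 1) → ℝ) :=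
  (MeasurableEquiv.piFinSuccAbove (fun _ => ℝ) (Fin.last N)).symm

lemma snocMeasurableEquiv_apply {N : ℕ} (p : ℝ × (Fin N → ℝ)) :
    snocMeasurableEquiv N p = Fin.snoc p.2 p.1 := by
  simp [snocMeasurableEquiv, MeasurableEquiv.piFinSuccAbove, Fin.insertNthEquiv]

lemma measurePreserving_snocMeasurableEquiv (N : ℕ) :
    MeasurePreserving (snocMeasurableEquiv N) (volume.prod volume) volume :=
  (volume_preserving_piFinSuccAbove (fun _ => ℝ) (Fin.last N)).symm _

theorem setIntegral_ordSimplex_succ {E : Type*} [NormedAddCommGroup E] [NormedSpace ℝ E]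
    {N : ℕ} {b : ℝ} (hb : 0 ≤ b) {G : (Fin (N + 1) → ℝ) → E}
    (hG : IntegrableOn G (ordSimplex (N + 1) b)) :
    ∫ t in ordSimplex (N + 1) b, G t = ∫ x in 0..b, ∫ s in ordSimplex N x, G (Fin.snoc s x) := by
  set S := ordSimplex (N + 1) b
  have hS := (isClosed_ordSimplex (N + 1) b).measurableSet
  have hmp := measurePreserving_snocMeasurableEquiv N
  have hint : Integrable (fun p : ℝ × (Fin N → ℝ) => S.indicator G (Fin.snoc p.2 p.1))
      (volume.prod volume) := by
    simpa [Function.comp_def, snocMeasurableEquiv_apply] using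
      (hmp.integrable_comp_emb (snocMeasurableEquiv N).measurableEmbedding).2
        ((integrable_indicator_iff hS).2 hG)
  have hslice (x : ℝ) : ∫ s, S.indicator G (Fin.snoc s x)
      = (Icc 0 b).indicator (fun x => ∫ s in ordSimplex N x, G (Fin.snoc s x)) x := by
    by_cases hx : x ∈ Icc 0 b
    · rw [indicator_of_mem hx, ← integral_indicator (isClosed_ordSimplex N x).measurableSet]
      congr 1 with s
      by_cases hs : s ∈ ordSimplex N x
      · rw [indicator_of_mem (snoc_mem_ordSimplex_iff.2 ⟨hx, hs⟩), indicator_of_mem hs]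
      · rw [indicator_of_notMem (fun h => hs (snoc_mem_ordSimplex_iff.1 h).2),
          indicator_of_notMem hs]
    · simp [S, indicator, snoc_mem_ordSimplex_iff, hx]
  calc ∫ t in S, G t = ∫ t, S.indicator G t := (integral_indicator hS).symm
    _ = ∫ p : ℝ × (Fin N → ℝ), S.indicator G (Fin.snoc p.2 p.1) ∂(volume.prod volume) := by
      simp_rw [← snocMeasurableEquiv_apply]
      exact (hmp.integral_comp (snocMeasurableEquiv N).measurableEmbedding _).symm
    _ = ∫ x in Icc 0 b, ∫ s in ordSimplex N x, G (Fin.snoc s x) := by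
      rw [integral_prod _ hint, ← integral_indicator measurableSet_Icc]
      simp_rw [hslice]
    _ = ∫ x in 0..b, ∫ s in ordSimplex N x, G (Fin.snoc s x) := by
      rw [intervalIntegral.integral_of_le hb, integral_Icc_eq_integral_Ioc]

section

variable {f : ℝ → ℝ} {N : ℕ} {b : ℝ}

lemma ContinuousOn.sum_apply_ordSimplex (hf : ContinuousOn f (Icc 0 b)) :
    ContinuousOn (fun t : Fin N → ℝ => ∑ n, f (t n)) (ordSimplex N b) :=
  continuousOn_finsetSum _ fun n _ =>
    hf.comp (continuous_apply n).continuousOn fun _ ht => ht.2 n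

lemma ContinuousOn.prod_apply_ordSimplex (hf : ContinuousOn f (Icc 0 b)) :
    ContinuousOn (fun t : Fin N → ℝ => ∏ n, f (t n)) (ordSimplex N b) :=
  continuousOn_finsetProd _ fun n _ =>
    hf.comp (continuous_apply n).continuousOn fun _ ht => ht.2 n

lemma ContinuousOn.integrableOn_ordSimplex {E : Type*} [NormedAddCommGroup E]
    {G : (Fin N → ℝ) → E}
    (hG : ContinuousOn G (ordSimplex N b)) : IntegrableOn G (ordSimplex N b) :=
  hG.integrableOn_compact (isCompact_ordSimplex N b)

end

section

variable {E : Type*} [NormedAddCommGroup E] [NormedSpace ℝ E]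

lemma hasDerivAt_integral_of_continuousOn_Icc [CompleteSpace E] {f : ℝ → E} {a b x : ℝ}
    (hf : ContinuousOn f (Icc a b)) (hx : x ∈ Ioo a b) :
    HasDerivAt (fun y => ∫ u in a..y, f u) (f x) x :=
  intervalIntegral.integral_hasDerivAt_right
    ((hf.mono (Icc_subset_Icc_right hx.2.le)).intervalIntegrable_of_Icc hx.1.le)
    ((hf.mono Ioo_subset_Icc_self).stronglyMeasurableAtFilter isOpen_Ioo x hx)
    (hf.continuousAt (Icc_mem_nhds hx.1 hx.2))

lemma continuousOn_integral_of_continuousOn_Icc {f : ℝ → E} {a b : ℝ} (hab : a ≤ b)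
    (hf : ContinuousOn f (Icc a b)) :
    ContinuousOn (fun y => ∫ u in a..y, f u) (Icc a b) := by
  have := intervalIntegral.continuousOn_primitive_interval (μ := volume) (f := f)
    (a := a) (b := b) (by rw [uIcc_of_le hab]; exact hf.integrableOn_Icc)
  rwa [uIcc_of_le hab] at this

end

open Nat in
theorem setIntegral_ordSimplex_prod {f : ℝ → ℝ} {b : ℝ} (hb : 0 ≤ b)
    (hf : ContinuousOn f (Icc 0 b)) (N : ℕ) :
    ∫ t in ordSimplex N b, ∏ n, f (t n) = (∫ u in 0..b, f u) ^ N / N ! := by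
  induction N generalizing b with
  | zero => simp [ordSimplex_zero, volume_pi, measureReal_def]
  | succ N ih =>
    set F := fun y => ∫ u in 0..y, f u
    have hF : ContinuousOn F (Icc 0 b) := continuousOn_integral_of_continuousOn_Icc hb hf
    have hderiv (x : ℝ) (hx : x ∈ Ioo 0 b) :
        HasDerivAt (fun y => F y ^ (N + 1) / (N + 1)!) (f x * (F x ^ N / N !)) x := by
      refine (((hasDerivAt_integral_of_continuousOn_Icc hf hx).pow (N + 1)).div_const
        _).congr_deriv ?_
      rw [factorial_succ]
      push_cast
      field_simp
      ring
    calc ∫ t in ordSimplex (N + 1) b, ∏ n, f (t n)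
        = ∫ x in 0..b, f x * (F x ^ N / N !) := by
          rw [setIntegral_ordSimplex_succ hb hf.prod_apply_ordSimplex.integrableOn_ordSimplex]
          refine intervalIntegral.integral_congr fun x hx => ?_
          rw [uIcc_of_le hb] at hx
          simp only [Fin.prod_univ_castSucc, Fin.snoc_castSucc, Fin.snoc_last]
          rw [integral_mul_const, ih hx.1 (hf.mono (Icc_subset_Icc_right hx.2)), mul_comm]
      _ = F b ^ (N + 1) / (N + 1)! := by
          rw [intervalIntegral.integral_eq_sub_of_hasDerivAt_of_le hb
            ((hF.pow _).div_const _) hderiv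
            ((hf.mul ((hF.pow _).div_const _)).intervalIntegrable_of_Icc hb)]
          simp [F]

open Nat in
lemma setIntegral_ordSimplex_succ_sum_mul_prod {f g : ℝ → ℝ} {b : ℝ} (hb : 0 ≤ b)
    (hf : ContinuousOn f (Icc 0 b)) (hg : ContinuousOn g (Icc 0 b)) (N : ℕ) :
    ∫ t in ordSimplex (N + 1) b, (∑ n, g (t n)) * ∏ n, f (t n)
      = ∫ x in 0..b, f x * (∫ s in ordSimplex N x, (∑ n, g (s n)) * ∏ n, f (s n))
          + f x * g x * ((∫ u in 0..x, f u) ^ N / N !) := by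
  rw [setIntegral_ordSimplex_succ hb
    (hg.sum_apply_ordSimplex.fun_mul hf.prod_apply_ordSimplex).integrableOn_ordSimplex]
  refine intervalIntegral.integral_congr fun x hx => ?_
  rw [uIcc_of_le hb] at hx
  have hxb : Icc 0 x ⊆ Icc 0 b := Icc_subset_Icc_right hx.2
  have hsplit (s : Fin N → ℝ) :
      (∑ n, g ((Fin.snoc s x : Fin (N + 1) → ℝ) n)) * ∏ n, f ((Fin.snoc s x : Fin (N + 1) → ℝ) n)
        = f x * ((∑ n, g (s n)) * ∏ n, f (s n)) + f x * g x * ∏ n, f (s n) := by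
    simp only [Fin.sum_univ_castSucc, Fin.prod_univ_castSucc, Fin.snoc_castSucc, Fin.snoc_last]
    ring
  have hsum : IntegrableOn (fun s : Fin N → ℝ => (∑ n, g (s n)) * ∏ n, f (s n)) (ordSimplex N x) :=
    ((hg.mono hxb).sum_apply_ordSimplex.fun_mul
      (hf.mono hxb).prod_apply_ordSimplex).integrableOn_ordSimplex
  have hprod : IntegrableOn (fun s : Fin N → ℝ => ∏ n, f (s n)) (ordSimplex N x) :=
    (hf.mono hxb).prod_apply_ordSimplex.integrableOn_ordSimplex
  simp only [hsplit]
  rw [integral_add (hsum.const_mul _) (hprod.const_mul _), integral_const_mul,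
    integral_const_mul, setIntegral_ordSimplex_prod hx.1 (hf.mono hxb)]

open Nat in
theorem setIntegral_ordSimplex_sum_mul_prod {f g G : ℝ → ℝ} {b : ℝ} (hb : 0 ≤ b)
    (hf : ContinuousOn f (Icc 0 b)) (hg : ContinuousOn g (Icc 0 b))
    (hG : ContinuousOn G (Icc 0 b)) (hG' : ∀ x ∈ Ioo 0 b, HasDerivAt G (f x * g x) x) (N : ℕ) :
    ∫ t in ordSimplex (N + 1) b, (∑ n, g (t n)) * ∏ n, f (t n)
      = (∫ u in 0..b, f u) ^ N / N ! * (G b - G 0) := by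
  induction N generalizing b with
  | zero =>
    rw [setIntegral_ordSimplex_succ_sum_mul_prod hb hf hg]
    simp only [one_mul, ordSimplex_zero, Finset.univ_eq_empty, Finset.sum_empty, zero_mul,
      integral_zero, mul_zero, pow_zero, factorial_zero, cast_one, div_one, mul_one, zero_add]
    exact intervalIntegral.integral_eq_sub_of_hasDerivAt_of_le hb hG hG'
      ((hf.fun_mul hg).intervalIntegrable_of_Icc hb)
  | succ N ih =>
    set F := fun y => ∫ u in 0..y, f u
    have hF : ContinuousOn F (Icc 0 b) := continuousOn_integral_of_continuousOn_Icc hb hf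
    have hderiv (x : ℝ) (hx : x ∈ Ioo 0 b) :
        HasDerivAt (fun y => F y ^ (N + 1) / (N + 1)! * (G y - G 0))
          (f x * (F x ^ N / N ! * (G x - G 0)) + f x * g x * (F x ^ (N + 1) / (N + 1)!)) x := by
      refine ((((hasDerivAt_integral_of_continuousOn_Icc hf hx).pow (N + 1)).div_const _).mul
        ((hG' x hx).sub_const _)).congr_deriv ?_
      simp only [Pi.pow_apply, factorial_succ]
      push_cast
      field_simp
      ring
    rw [setIntegral_ordSimplex_succ_sum_mul_prod hb hf hg]
    calc _ = ∫ x in 0..b,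
            f x * (F x ^ N / N ! * (G x - G 0)) + f x * g x * (F x ^ (N + 1) / (N + 1)!) := by
          refine intervalIntegral.integral_congr fun x hx => ?_
          rw [uIcc_of_le hb] at hx
          have hxb : Icc 0 x ⊆ Icc 0 b := Icc_subset_Icc_right hx.2
          rw [ih hx.1 (hf.mono hxb) (hg.mono hxb) (hG.mono hxb)
            fun y hy => hG' y ⟨hy.1, hy.2.trans_le hx.2⟩]
      _ = F b ^ (N + 1) / (N + 1)! * (G b - G 0) := by
          rw [intervalIntegral.integral_eq_sub_of_hasDerivAt_of_le hb
            (((hF.pow _).div_const _).mul (hG.sub continuousOn_const)) hderiv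
            (((hf.mul (((hF.pow _).div_const _).mul (hG.sub continuousOn_const))).add
              ((hf.mul hg).mul ((hF.pow _).div_const _))).intervalIntegrable_of_Icc hb)]
          simp [F]

/-- The `N`-event contribution to the expectation of `∑ₙ F (tₙ)` under the Poisson process with
intensity `lam` on `[0, T]`. -/
noncomputable def poissonSumIntegral (lam : ℝ → ℝ) (T : ℝ) (N : ℕ) (F : ℝ → ℝ) : ℝ :=
  ∫ t in ordSimplex N T, poissonDensity lam T t * ∑ n, F (t n)

section Poisson

variable {lam F G : ℝ → ℝ} {T : ℝ} {N : ℕ}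

lemma poissonSumIntegral_eq_mul_setIntegral :
    poissonSumIntegral lam T N F
      = exp (-∫ s in 0..T, lam s) * ∫ t in ordSimplex N T, (∑ n, F (t n)) * ∏ n, lam (t n) := by
  rw [poissonSumIntegral, ← integral_const_mul]
  congr 1 with t
  rw [poissonDensity]
  ring

lemma ContinuousOn.integrableOn_poissonDensity_mul_sum (hlam : ContinuousOn lam (Icc 0 T))
    (hF : ContinuousOn F (Icc 0 T)) :
    IntegrableOn (fun t : Fin N → ℝ => poissonDensity lam T t * ∑ n, F (t n)) (ordSimplex N T) :=
  ((hlam.prod_apply_ordSimplex.fun_mul continuousOn_const).fun_mul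
    hF.sum_apply_ordSimplex).integrableOn_ordSimplex

lemma poissonSumIntegral_add (hlam : ContinuousOn lam (Icc 0 T))
    (hF : ContinuousOn F (Icc 0 T)) (hG : ContinuousOn G (Icc 0 T)) :
    poissonSumIntegral lam T N (fun u => F u + G u)
      = poissonSumIntegral lam T N F + poissonSumIntegral lam T N G := by
  simp only [poissonSumIntegral, Finset.sum_add_distrib, mul_add]
  exact integral_add (hlam.integrableOn_poissonDensity_mul_sum hF)
    (hlam.integrableOn_poissonDensity_mul_sum hG)

lemma poissonSumIntegral_const_mul (c : ℝ) :
    poissonSumIntegral lam T N (fun u => c * F u) = c * poissonSumIntegral lam T N F := by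
  simp only [poissonSumIntegral, ← Finset.mul_sum, ← integral_const_mul]
  congr 1 with t
  ring

open Nat in
lemma setIntegral_poissonDensity_cons (hT : 0 ≤ T) (hlam : ContinuousOn lam (Icc 0 T)) (M : ℕ) :
    ∫ s in ordSimplex M T, poissonDensity lam T (Fin.cons 0 s)
      = lam 0 * exp (-∫ s in 0..T, lam s) * ((∫ s in 0..T, lam s) ^ M / M !) := by
  simp only [poissonDensity, Fin.prod_univ_succ, Fin.cons_zero, Fin.cons_succ]
  rw [integral_mul_const, integral_const_mul, setIntegral_ordSimplex_prod hT hlam]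
  ring

open Nat in
lemma setIntegral_poissonDensity_snoc (hT : 0 ≤ T) (hlam : ContinuousOn lam (Icc 0 T)) (M : ℕ) :
    ∫ s in ordSimplex M T, poissonDensity lam T (Fin.snoc s T)
      = lam T * exp (-∫ s in 0..T, lam s) * ((∫ s in 0..T, lam s) ^ M / M !) := by
  simp only [poissonDensity, Fin.prod_univ_castSucc, Fin.snoc_castSucc, Fin.snoc_last]
  rw [integral_mul_const, integral_mul_const, setIntegral_ordSimplex_prod hT hlam]
  ring

variable {lam' h h' : ℝ → ℝ}

theorem poissonSumIntegral_score_mul_add_deriv (hT : 0 ≤ T) (hlam : ContinuousOn lam (Icc 0 T))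
    (hlam' : ∀ x ∈ Ioo 0 T, HasDerivAt lam (lam' x) x) (hlam'c : ContinuousOn lam' (Icc 0 T))
    (hlam0 : ∀ x ∈ Icc 0 T, lam x ≠ 0) (hh : ContinuousOn h (Icc 0 T))
    (hh' : ∀ x ∈ Ioo 0 T, HasDerivAt h (h' x) x) (hh'c : ContinuousOn h' (Icc 0 T)) (M : ℕ) :
    poissonSumIntegral lam T (M + 1) (fun u => lam' u / lam u * h u + h' u)
      = h T * (∫ s in ordSimplex M T, poissonDensity lam T (Fin.snoc s T))
        - h 0 * ∫ s in ordSimplex M T, poissonDensity lam T (Fin.cons 0 s) := by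
  have hg : ContinuousOn (fun u => lam' u / lam u * h u + h' u) (Icc 0 T) :=
    ((hlam'c.div hlam hlam0).mul hh).add hh'c
  have hderiv (x : ℝ) (hx : x ∈ Ioo 0 T) :
      HasDerivAt (fun y => lam y * h y) (lam x * (lam' x / lam x * h x + h' x)) x := by
    refine ((hlam' x hx).mul (hh' x hx)).congr_deriv ?_
    field_simp [hlam0 x (Ioo_subset_Icc_self hx)]
  rw [poissonSumIntegral_eq_mul_setIntegral,
    setIntegral_ordSimplex_sum_mul_prod hT hlam hg (hlam.fun_mul hh) hderiv,
    setIntegral_poissonDensity_cons hT hlam, setIntegral_poissonDensity_snoc hT hlam]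
  ring

lemma poissonSumIntegral_sq_sub (hlam : ContinuousOn lam (Icc 0 T)) {g : ℝ → ℝ}
    (hg : ContinuousOn g (Icc 0 T)) (hh : ContinuousOn h (Icc 0 T))
    (hh' : ContinuousOn h' (Icc 0 T)) :
    poissonSumIntegral lam T N (fun u => (g u - h u) ^ 2)
      = 2 * poissonSumIntegral lam T N (fun u => 1 / 2 * h u ^ 2 + h' u)
        + poissonSumIntegral lam T N (fun u => g u ^ 2)
        - 2 * poissonSumIntegral lam T N (fun u => g u * h u + h' u) := by
  have hB : ContinuousOn (fun u => 2 * (1 / 2 * h u ^ 2 + h' u)) (Icc 0 T) :=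
    continuousOn_const.mul ((continuousOn_const.mul (hh.pow 2)).add hh')
  have hC : ContinuousOn (fun u => g u ^ 2) (Icc 0 T) := hg.pow 2
  have hD : ContinuousOn (fun u => -2 * (g u * h u + h' u)) (Icc 0 T) :=
    continuousOn_const.mul ((hg.mul hh).add hh')
  have hexpand : (fun u => (g u - h u) ^ 2)
      = fun u => 2 * (1 / 2 * h u ^ 2 + h' u) + (g u ^ 2 + -2 * (g u * h u + h' u)) := by
    ext u; ring
  rw [hexpand, poissonSumIntegral_add hlam hB (hC.fun_add hD),
    poissonSumIntegral_add hlam hC hD, poissonSumIntegral_const_mul, poissonSumIntegral_const_mul]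
  ring

end Poisson

theorem poissonSumIntegral_scoreMatching {lam lam' h h' : ℝ → ℝ} {T : ℝ} (hT : 0 ≤ T)
    (hlam : ContinuousOn lam (Icc 0 T)) (hlam' : ∀ x ∈ Ioo 0 T, HasDerivAt lam (lam' x) x)
    (hlam'c : ContinuousOn lam' (Icc 0 T)) (hlam0 : ∀ x ∈ Icc 0 T, lam x ≠ 0)
    (hh : ContinuousOn h (Icc 0 T)) (hh' : ∀ x ∈ Ioo 0 T, HasDerivAt h (h' x) x)
    (hh'c : ContinuousOn h' (Icc 0 T))
    (hB : Summable fun M => poissonSumIntegral lam T (M + 1) (fun u => 1 / 2 * h u ^ 2 + h' u))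
    (hC : Summable fun M => poissonSumIntegral lam T (M + 1) (fun u => (lam' u / lam u) ^ 2))
    (hb₀ : Summable fun M => ∫ s in ordSimplex M T, poissonDensity lam T (Fin.cons 0 s))
    (hb₁ : Summable fun M => ∫ s in ordSimplex M T, poissonDensity lam T (Fin.snoc s T)) :
    1 / 2 * ∑' M, poissonSumIntegral lam T (M + 1) (fun u => (lam' u / lam u - h u) ^ 2)
      = ∑' M, poissonSumIntegral lam T (M + 1) (fun u => 1 / 2 * h u ^ 2 + h' u)
        + 1 / 2 * ∑' M, poissonSumIntegral lam T (M + 1) (fun u => (lam' u / lam u) ^ 2)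
        + h 0 * (∑' M, ∫ s in ordSimplex M T, poissonDensity lam T (Fin.cons 0 s))
        - h T * ∑' M, ∫ s in ordSimplex M T, poissonDensity lam T (Fin.snoc s T) := by
  have hg : ContinuousOn (fun u => lam' u / lam u) (Icc 0 T) := hlam'c.div hlam hlam0
  have hterm (M : ℕ) :
      poissonSumIntegral lam T (M + 1) (fun u => (lam' u / lam u - h u) ^ 2)
        = 2 * poissonSumIntegral lam T (M + 1) (fun u => 1 / 2 * h u ^ 2 + h' u)
          + poissonSumIntegral lam T (M + 1) (fun u => (lam' u / lam u) ^ 2)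
          + 2 * h 0 * (∫ s in ordSimplex M T, poissonDensity lam T (Fin.cons 0 s))
          - 2 * h T * ∫ s in ordSimplex M T, poissonDensity lam T (Fin.snoc s T) := by
    rw [poissonSumIntegral_sq_sub hlam hg hh hh'c,
      poissonSumIntegral_score_mul_add_deriv hT hlam hlam' hlam'c hlam0 hh hh' hh'c]
    ring
  rw [tsum_congr hterm,
    ((hB.mul_left 2).add hC |>.add (hb₀.mul_left _)).tsum_sub (hb₁.mul_left _),
    ((hB.mul_left 2).add hC).tsum_add (hb₀.mul_left _), (hB.mul_left 2).tsum_add hC,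
    tsum_mul_left, tsum_mul_left, tsum_mul_left]
  ring

theorem stmt_14_general (T : ℝ) (hT : 0 < T)
    (lam lam' lamθ lamθ' lamθ'' : ℝ → ℝ)
    (hlam : ∀ t ∈ Set.Icc 0 T, HasDerivAt lam (lam' t) t)
    (hlam'c : ContinuousOn lam' (Set.Icc 0 T))
    (hlampos : ∀ t ∈ Set.Icc 0 T, 0 < lam t)
    (hlamθ : ∀ t ∈ Set.Icc 0 T, HasDerivAt lamθ (lamθ' t) t)
    (hlamθ' : ∀ t ∈ Set.Icc 0 T, HasDerivAt lamθ' (lamθ'' t) t)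
    (hlamθ''c : ContinuousOn lamθ'' (Set.Icc 0 T))
    (hlamθpos : ∀ t ∈ Set.Icc 0 T, 0 < lamθ t)
    (hS2 : Summable fun M : ℕ => ∫ t in ordSimplex (M + 1) T,
      poissonDensity lam T t * ∑ n : Fin (M + 1),
        ((1/2) * (lamθ' (t n) / lamθ (t n))^2
          + (lamθ'' (t n) / lamθ (t n) - (lamθ' (t n) / lamθ (t n))^2)))
    (hS3 : Summable fun M : ℕ => ∫ t in ordSimplex (M + 1) T,
      poissonDensity lam T t * ∑ n : Fin (M + 1), (lam' (t n) / lam (t n))^2)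
    (hS4 : Summable fun M : ℕ => ∫ s in ordSimplex M T,
      poissonDensity lam T (Fin.cons 0 s))
    (hS5 : Summable fun M : ℕ => ∫ s in ordSimplex M T,
      poissonDensity lam T (Fin.snoc s T)) :
    (1/2) * ∑' M : ℕ, (∫ t in ordSimplex (M + 1) T,
        poissonDensity lam T t * ∑ n : Fin (M + 1),
          (lam' (t n) / lam (t n) - lamθ' (t n) / lamθ (t n))^2)
    = (∑' M : ℕ, ∫ t in ordSimplex (M + 1) T,
        poissonDensity lam T t * ∑ n : Fin (M + 1),
          ((1/2) * (lamθ' (t n) / lamθ (t n))^2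
            + (lamθ'' (t n) / lamθ (t n) - (lamθ' (t n) / lamθ (t n))^2)))
      + (1/2) * (∑' M : ℕ, ∫ t in ordSimplex (M + 1) T,
          poissonDensity lam T t * ∑ n : Fin (M + 1), (lam' (t n) / lam (t n))^2)
      + (lamθ' 0 / lamθ 0) * (∑' M : ℕ, ∫ s in ordSimplex M T,
          poissonDensity lam T (Fin.cons 0 s))
      - (lamθ' T / lamθ T) * (∑' M : ℕ, ∫ s in ordSimplex M T,
          poissonDensity lam T (Fin.snoc s T)) := by
  have hinterior {f f' : ℝ → ℝ} (hf : ∀ t ∈ Icc 0 T, HasDerivAt f (f' t) t) :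
      ∀ t ∈ Ioo 0 T, HasDerivAt f (f' t) t :=
    fun t ht => hf t (Ioo_subset_Icc_self ht)
  have hlamθ0 (t : ℝ) (ht : t ∈ Icc 0 T) : lamθ t ≠ 0 := (hlamθpos t ht).ne'
  have hscoreθ (t : ℝ) (ht : t ∈ Icc 0 T) :
      HasDerivAt (fun u => lamθ' u / lamθ u)
        (lamθ'' t / lamθ t - (lamθ' t / lamθ t) ^ 2) t :=
    ((hlamθ' t ht).div (hlamθ t ht) (hlamθ0 t ht)).congr_deriv (by field_simp [hlamθ0 t ht])
  have hθc := HasDerivAt.continuousOn hlamθ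
  exact poissonSumIntegral_scoreMatching (h := fun u => lamθ' u / lamθ u)
    (h' := fun u => lamθ'' u / lamθ u - (lamθ' u / lamθ u) ^ 2) hT.le
    (HasDerivAt.continuousOn hlam) (hinterior hlam) hlam'c (fun t ht => (hlampos t ht).ne')
    (HasDerivAt.continuousOn hscoreθ) (hinterior hscoreθ)
    ((hlamθ''c.div hθc hlamθ0).sub (((HasDerivAt.continuousOn hlamθ').div hθc hlamθ0).pow 2))
    hS2 hS3 hS4 hS5

/-- for a Poisson process with intensity `lam` (score `g = lam'/lam`) and a
model intensity `lamθ` (score `gθ = lamθ'/lamθ`, whose derivative is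
`lamθ''/lamθ - (lamθ'/lamθ)²`), assuming absolute convergence of all series over the
number of events `N = M + 1 ≥ 1`, the explicit score-matching objective equals the
implicit one plus a `lamθ`-independent constant plus the two boundary series weighted by
`gθ 0` and `gθ T`. -/
theorem stmt_14 (T : ℝ) (hT : 0 < T)
    (lam lam' lamθ lamθ' lamθ'' : ℝ → ℝ)
    (hlam : ∀ t ∈ Set.Icc 0 T, HasDerivAt lam (lam' t) t)
    (hlam'c : ContinuousOn lam' (Set.Icc 0 T))
    (hlampos : ∀ t ∈ Set.Icc 0 T, 0 < lam t)
    (hlamθ : ∀ t ∈ Set.Icc 0 T, HasDerivAt lamθ (lamθ' t) t)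
    (hlamθ' : ∀ t ∈ Set.Icc 0 T, HasDerivAt lamθ' (lamθ'' t) t)
    (hlamθ''c : ContinuousOn lamθ'' (Set.Icc 0 T))
    (hlamθpos : ∀ t ∈ Set.Icc 0 T, 0 < lamθ t)
    (hS1 : Summable fun M : ℕ => ∫ t in ordSimplex (M + 1) T,
      poissonDensity lam T t * ∑ n : Fin (M + 1),
        (lam' (t n) / lam (t n) - lamθ' (t n) / lamθ (t n))^2)
    (hS2 : Summable fun M : ℕ => ∫ t in ordSimplex (M + 1) T,
      poissonDensity lam T t * ∑ n : Fin (M + 1),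
        ((1/2) * (lamθ' (t n) / lamθ (t n))^2
          + (lamθ'' (t n) / lamθ (t n) - (lamθ' (t n) / lamθ (t n))^2)))
    (hS3 : Summable fun M : ℕ => ∫ t in ordSimplex (M + 1) T,
      poissonDensity lam T t * ∑ n : Fin (M + 1), (lam' (t n) / lam (t n))^2)
    (hS4 : Summable fun M : ℕ => ∫ s in ordSimplex M T,
      poissonDensity lam T (Fin.cons 0 s))
    (hS5 : Summable fun M : ℕ => ∫ s in ordSimplex M T,
      poissonDensity lam T (Fin.snoc s T)) :
    (1/2) * ∑' M : ℕ, (∫ t in ordSimplex (M + 1) T,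
        poissonDensity lam T t * ∑ n : Fin (M + 1),
          (lam' (t n) / lam (t n) - lamθ' (t n) / lamθ (t n))^2)
    = (∑' M : ℕ, ∫ t in ordSimplex (M + 1) T,
        poissonDensity lam T t * ∑ n : Fin (M + 1),
          ((1/2) * (lamθ' (t n) / lamθ (t n))^2
            + (lamθ'' (t n) / lamθ (t n) - (lamθ' (t n) / lamθ (t n))^2)))
      + (1/2) * (∑' M : ℕ, ∫ t in ordSimplex (M + 1) T,
          poissonDensity lam T t * ∑ n : Fin (M + 1), (lam' (t n) / lam (t n))^2)
      + (lamθ' 0 / lamθ 0) * (∑' M : ℕ, ∫ s in ordSimplex M T,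
          poissonDensity lam T (Fin.cons 0 s))
      - (lamθ' T / lamθ T) * (∑' M : ℕ, ∫ s in ordSimplex M T,
          poissonDensity lam T (Fin.snoc s T)) :=
  stmt_14_general T hT lam lam' lamθ lamθ' lamθ'' hlam hlam'c hlampos hlamθ hlamθ' hlamθ''c hlamθpos
    hS2 hS3 hS4 hS5
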